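/- For all r > 0 and μ ≥ ν > 0, the inequality (S_ν(r)/ζ(2ν+1))^{1/(ν+1)} ≥ (S_μ(r)/ζ(2μ+1))^{1/(μ+1)} holds. -/

import Mathlib

open Real

noncomputable def mathieuS (μ r : ℝ) : ℝ :=
  ∑' n : ℕ, (2 * ((n : ℝ) + 1)) / ((((n : ℝ) + 1) ^ 2 + r ^ 2) ^ (μ + 1))

noncomputable def zetaR (s : ℝ) : ℝ := ∑' n : ℕ, ((n : ℝ) + 1) ^ (-s)

/-!
With `N_s(c) = ∑ₖ k (k² + c)^(-s)` we have `S_μ(r) = 2 N_{μ+1}(r²)` and `ζ(2μ+1) = N_{μ+1}(0)`.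
Since `∂_c N_s = -s N_{s+1}`, the derivative of `c ↦ log N_b(c) / b - log N_a(c) / a` is
`N_{a+1}/N_a - N_{b+1}/N_b`, which is `≤ 0` for `a ≤ b` by Chebyshev's sum inequality for the
weights `k (k² + c)^(-a)` and the two decreasing sequences `(k² + c)^(a-b)` and `(k² + c)^(-1)`.
Hence `(N_b(c) / N_b(0))^(1/b) ≤ (N_a(c) / N_a(0))^(1/a)` for `c ≥ 0`, and `2^(1/b) ≤ 2^(1/a)`
takes care of the factor `2`.
-/

theorem Monovary.tsum_mul_tsum_le_tsum_mul_tsum {ι : Type*} {w f g : ι → ℝ}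
    (hfg : Monovary f g) (hw : ∀ i, 0 ≤ w i) (h₁ : Summable w)
    (hf : Summable fun i ↦ w i * f i) (hg : Summable fun i ↦ w i * g i)
    (hfg' : Summable fun i ↦ w i * (f i * g i)) :
    (∑' i, w i * f i) * (∑' i, w i * g i) ≤ (∑' i, w i) * ∑' i, w i * (f i * g i) := by
  have prod_eq {u v : ι → ℝ} (hu : Summable u) (hv : Summable v) :=
    tsum_mul_tsum_of_summable_norm (f := u) (g := v) hu.abs hv.abs
  have prod_summable {u v : ι → ℝ} (hu : Summable u) (hv : Summable v) :=
    summable_mul_of_summable_norm (f := u) (g := v) hu.abs hv.abs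
  -- `∑ᵢⱼ wᵢ wⱼ (fᵢ - fⱼ)(gᵢ - gⱼ) ≥ 0` is twice the difference of the two sides.
  have key : 0 ≤ ∑' z : ι × ι, w z.1 * w z.2 * ((f z.1 - f z.2) * (g z.1 - g z.2)) :=
    tsum_nonneg fun z ↦ mul_nonneg (mul_nonneg (hw _) (hw _)) (hfg.sub_mul_sub_nonneg _ _)
  have expand : ∑' z : ι × ι, w z.1 * w z.2 * ((f z.1 - f z.2) * (g z.1 - g z.2)) =
      (∑' i, w i * (f i * g i)) * (∑' i, w i) - (∑' i, w i * f i) * (∑' i, w i * g i)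
        - ((∑' i, w i * g i) * (∑' i, w i * f i)) + (∑' i, w i) * ∑' i, w i * (f i * g i) := by
    rw [prod_eq hfg' h₁, prod_eq hf hg, prod_eq hg hf, prod_eq h₁ hfg',
      ← (prod_summable hfg' h₁).tsum_sub (prod_summable hf hg),
      ← ((prod_summable hfg' h₁).sub (prod_summable hf hg)).tsum_sub (prod_summable hg hf),
      ← (((prod_summable hfg' h₁).sub (prod_summable hf hg)).sub
        (prod_summable hg hf)).tsum_add (prod_summable h₁ hfg')]
    exact tsum_congr fun z ↦ by ring
  nlinarith

lemma summable_natCast_add_one_rpow {p : ℝ} (hp : p < -1) :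
    Summable fun n : ℕ ↦ ((n : ℝ) + 1) ^ p := by
  simpa using (summable_nat_add_iff 1).2 (summable_nat_rpow.2 hp)

noncomputable def mathieuTerm (s c : ℝ) (n : ℕ) : ℝ :=
  ((n : ℝ) + 1) * (((n : ℝ) + 1) ^ 2 + c) ^ (-s)

noncomputable def mathieuSeries (s c : ℝ) : ℝ := ∑' n, mathieuTerm s c n

section MathieuSeries

variable {s c : ℝ}

lemma natCast_add_one_sq_div_two_le (n : ℕ) (hc : -1/2 < c) :
    ((n : ℝ) + 1) ^ 2 / 2 ≤ ((n : ℝ) + 1) ^ 2 + c := by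
  nlinarith [sq_nonneg (n : ℝ), (Nat.cast_nonneg n : (0 : ℝ) ≤ n)]

lemma natCast_add_one_sq_add_pos (n : ℕ) (hc : -1/2 < c) : 0 < ((n : ℝ) + 1) ^ 2 + c :=
  lt_of_lt_of_le (by positivity) (natCast_add_one_sq_div_two_le n hc)

lemma mathieuTerm_nonneg (hc : -1/2 < c) (n : ℕ) : 0 ≤ mathieuTerm s c n :=
  mul_nonneg (by positivity) (rpow_nonneg (natCast_add_one_sq_add_pos n hc).le _)

lemma mathieuTerm_mul_rpow (hc : -1/2 < c) (n : ℕ) (p : ℝ) :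
    mathieuTerm s c n * (((n : ℝ) + 1) ^ 2 + c) ^ p = mathieuTerm (s - p) c n := by
  rw [mathieuTerm, mathieuTerm, mul_assoc, ← rpow_add (natCast_add_one_sq_add_pos n hc), neg_sub,
    sub_eq_neg_add]

lemma mathieuTerm_le (hs : 0 < s) (hc : -1/2 < c) (n : ℕ) :
    mathieuTerm s c n ≤ 2 ^ s * ((n : ℝ) + 1) ^ (1 - 2 * s) := by
  have hn : (0 : ℝ) < (n : ℝ) + 1 := by positivity
  calc mathieuTerm s c n ≤ ((n : ℝ) + 1) * (((n : ℝ) + 1) ^ 2 / 2) ^ (-s) := by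
        unfold mathieuTerm
        gcongr _ * ?_
        exact rpow_le_rpow_of_nonpos (by positivity) (natCast_add_one_sq_div_two_le n hc)
          (by linarith)
    _ = 2 ^ s * ((n : ℝ) + 1) ^ (1 - 2 * s) := by
        rw [div_rpow (by positivity) zero_le_two, rpow_neg zero_le_two, div_inv_eq_mul,
          ← rpow_natCast, ← rpow_mul hn.le, sub_eq_add_neg, rpow_add hn, rpow_one]
        push_cast
        ring_nf

lemma summable_mathieuTerm (hs : 1 < s) (hc : -1/2 < c) : Summable (mathieuTerm s c) :=
  .of_nonneg_of_le (mathieuTerm_nonneg hc) (mathieuTerm_le (by linarith) hc)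
    ((summable_natCast_add_one_rpow (by linarith)).mul_left _)

lemma mathieuSeries_pos (hs : 1 < s) (hc : -1/2 < c) : 0 < mathieuSeries s c :=
  (summable_mathieuTerm hs hc).tsum_pos (mathieuTerm_nonneg hc) 0
    (mul_pos (by positivity) (rpow_pos_of_pos (natCast_add_one_sq_add_pos 0 hc) _))

lemma hasDerivAt_mathieuSeries (hs : 1 < s) (hc : -1/2 < c) :
    HasDerivAt (mathieuSeries s) (-s * mathieuSeries (s + 1) c) c := by
  have hderiv (n : ℕ) (y : ℝ) (hy : y ∈ Set.Ioi (-1/2 : ℝ)) :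
      HasDerivAt (mathieuTerm s · n) (-s * mathieuTerm (s + 1) y n) y := by
    have := (((hasDerivAt_id' y).const_add (((n : ℝ) + 1) ^ 2)).rpow_const (p := -s)
      (Or.inl (natCast_add_one_sq_add_pos n hy).ne')).const_mul ((n : ℝ) + 1)
    refine this.congr_deriv ?_
    unfold mathieuTerm
    rw [neg_add, ← sub_eq_add_neg]
    ring
  have hbound (n : ℕ) (y : ℝ) (hy : y ∈ Set.Ioi (-1/2 : ℝ)) :
      ‖-s * mathieuTerm (s + 1) y n‖ ≤ s * (2 ^ (s + 1) * ((n : ℝ) + 1) ^ (1 - 2 * (s + 1))) := by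
    rw [norm_mul, norm_neg, Real.norm_of_nonneg (by linarith),
      Real.norm_of_nonneg (mathieuTerm_nonneg hy n)]
    exact mul_le_mul_of_nonneg_left (mathieuTerm_le (by linarith) hy n) (by linarith)
  have hu : Summable fun n : ℕ ↦ s * (2 ^ (s + 1) * ((n : ℝ) + 1) ^ (1 - 2 * (s + 1))) :=
    ((summable_natCast_add_one_rpow (by linarith)).mul_left _).mul_left _
  have := hasDerivAt_tsum_of_isPreconnected hu isOpen_Ioi (convex_Ioi _).isPreconnected
    hderiv hbound (Set.mem_Ioi.2 hc) (summable_mathieuTerm hs hc) (Set.mem_Ioi.2 hc)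
  rwa [tsum_mul_left] at this

lemma mathieuSeries_mul_le {a b : ℝ} (ha : 1 < a) (hab : a ≤ b) (hc : -1/2 < c) :
    mathieuSeries b c * mathieuSeries (a + 1) c ≤ mathieuSeries a c * mathieuSeries (b + 1) c := by
  set x : ℕ → ℝ := fun n ↦ ((n : ℝ) + 1) ^ 2 + c
  have hx_mono : Monotone x := fun m n hmn ↦ by dsimp only [x]; gcongr
  have hanti {p : ℝ} (hp : p ≤ 0) : Antitone fun n ↦ x n ^ p := fun m n hmn ↦
    rpow_le_rpow_of_nonpos (natCast_add_one_sq_add_pos m hc) (hx_mono hmn) hp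
  have hmonovary : Monovary (fun n ↦ x n ^ (a - b)) (fun n ↦ x n ^ (-1 : ℝ)) :=
    (hanti (by linarith)).monovary (hanti (by norm_num))
  have hmul (p : ℝ) : (fun n ↦ mathieuTerm a c n * x n ^ p) = mathieuTerm (a - p) c :=
    funext fun n ↦ mathieuTerm_mul_rpow hc n p
  have hmul₂ : (fun n ↦ mathieuTerm a c n * (x n ^ (a - b) * x n ^ (-1 : ℝ))) =
      mathieuTerm (b + 1) c := by
    funext n
    rw [← rpow_add (natCast_add_one_sq_add_pos n hc), mathieuTerm_mul_rpow hc]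
    ring_nf
  have := hmonovary.tsum_mul_tsum_le_tsum_mul_tsum (mathieuTerm_nonneg hc)
    (summable_mathieuTerm ha hc)
  simp only [hmul, hmul₂, sub_sub_cancel, sub_neg_eq_add] at this
  exact this (summable_mathieuTerm (by linarith) hc) (summable_mathieuTerm (by linarith) hc)
    (summable_mathieuTerm (by linarith) hc)

lemma antitoneOn_log_mathieuSeries_div_sub {a b : ℝ} (ha : 1 < a) (hab : a ≤ b) :
    AntitoneOn (fun c ↦ log (mathieuSeries b c) / b - log (mathieuSeries a c) / a)
      (Set.Ioi (-1/2)) := by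
  have hb : 1 < b := ha.trans_le hab
  have hderiv (c : ℝ) (hc : c ∈ Set.Ioi (-1/2 : ℝ)) :
      HasDerivAt (fun c ↦ log (mathieuSeries b c) / b - log (mathieuSeries a c) / a)
        (mathieuSeries (a + 1) c / mathieuSeries a c
          - mathieuSeries (b + 1) c / mathieuSeries b c) c := by
    have hb' := (hasDerivAt_mathieuSeries hb hc).log (mathieuSeries_pos hb hc).ne'
    have ha' := (hasDerivAt_mathieuSeries ha hc).log (mathieuSeries_pos ha hc).ne'
    refine ((hb'.div_const b).sub (ha'.div_const a)).congr_deriv ?_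
    field_simp
    ring
  refine antitoneOn_of_deriv_nonpos (convex_Ioi _)
    (fun c hc ↦ (hderiv c hc).continuousAt.continuousWithinAt)
    (fun c hc ↦ (hderiv c (interior_subset hc)).differentiableAt.differentiableWithinAt)
    fun c hc ↦ ?_
  rw [interior_Ioi] at hc
  rw [(hderiv c hc).deriv, sub_nonpos, div_le_div_iff₀ (mathieuSeries_pos ha hc)
    (mathieuSeries_pos hb hc)]
  linarith [mathieuSeries_mul_le ha hab hc]

lemma mathieuSeries_div_rpow_one_div_le {a b : ℝ} (ha : 1 < a) (hab : a ≤ b) (hc : 0 ≤ c) :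
    (mathieuSeries b c / mathieuSeries b 0) ^ (1 / b) ≤
      (mathieuSeries a c / mathieuSeries a 0) ^ (1 / a) := by
  have hb : 1 < b := ha.trans_le hab
  have hc' : -1/2 < c := by linarith
  have h0 : (-1/2 : ℝ) < 0 := by norm_num
  have := antitoneOn_log_mathieuSeries_div_sub ha hab h0 hc' hc
  rw [rpow_def_of_pos (div_pos (mathieuSeries_pos hb hc') (mathieuSeries_pos hb h0)),
    rpow_def_of_pos (div_pos (mathieuSeries_pos ha hc') (mathieuSeries_pos ha h0)), exp_le_exp,
    log_div (mathieuSeries_pos hb hc').ne' (mathieuSeries_pos hb h0).ne',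
    log_div (mathieuSeries_pos ha hc').ne' (mathieuSeries_pos ha h0).ne',
    mul_one_div, mul_one_div, sub_div, sub_div]
  linarith

end MathieuSeries

lemma mathieuS_eq_two_mul_mathieuSeries (μ r : ℝ) :
    mathieuS μ r = 2 * mathieuSeries (μ + 1) (r ^ 2) := by
  rw [mathieuS, mathieuSeries, ← tsum_mul_left]
  refine tsum_congr fun n ↦ ?_
  rw [mathieuTerm, rpow_neg (by positivity), mul_div_assoc, div_eq_mul_inv]

lemma zetaR_two_mul_add_one (s : ℝ) : zetaR (2 * s + 1) = mathieuSeries (s + 1) 0 := by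
  refine tsum_congr fun n ↦ ?_
  have hn : (0 : ℝ) < (n : ℝ) + 1 := by positivity
  rw [mathieuTerm, add_zero, ← rpow_natCast, ← rpow_mul hn.le,
    show -(2 * s + 1) = 1 + ((2 : ℕ) : ℝ) * -(s + 1) by push_cast; ring, rpow_add hn, rpow_one]

theorem stmt5_general (r μ ν : ℝ) (hν : 0 < ν) (hμν : ν ≤ μ) :
    (mathieuS ν r / zetaR (2 * ν + 1)) ^ (1 / (ν + 1)) ≥
      (mathieuS μ r / zetaR (2 * μ + 1)) ^ (1 / (μ + 1)) := by
  have hν₁ : 1 < ν + 1 := by linarith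
  have hμν₁ : ν + 1 ≤ μ + 1 := by linarith
  have hμ₁ : 1 < μ + 1 := hν₁.trans_le hμν₁
  have hratio {s : ℝ} (hs : 1 < s) : 0 ≤ mathieuSeries s (r ^ 2) / mathieuSeries s 0 :=
    div_nonneg (mathieuSeries_pos hs (by nlinarith [sq_nonneg r])).le
      (mathieuSeries_pos hs (by norm_num)).le
  simp only [mathieuS_eq_two_mul_mathieuSeries, zetaR_two_mul_add_one, mul_div_assoc]
  rw [ge_iff_le, mul_rpow zero_le_two (hratio hμ₁), mul_rpow zero_le_two (hratio hν₁)]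
  exact mul_le_mul (rpow_le_rpow_of_exponent_le one_le_two (by gcongr))
    (mathieuSeries_div_rpow_one_div_le hν₁ hμν₁ (sq_nonneg r)) (rpow_nonneg (hratio hμ₁) _)
    (by positivity)

theorem stmt5 (r μ ν : ℝ) (hr : 0 < r) (hν : 0 < ν) (hμν : ν ≤ μ) :
    (mathieuS ν r / zetaR (2 * ν + 1)) ^ (1 / (ν + 1)) ≥
      (mathieuS μ r / zetaR (2 * μ + 1)) ^ (1 / (μ + 1)) :=
  stmt5_general r μ ν hν hμν
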